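/- Let P and Q be probability measures on a measurable space Ω with Q absolutely continuous with respect to P. Let f : Ω → ℝ be measurable and Q-integrable with E_P[f] = μ, and suppose f − μ is sub-Gaussian with variance proxy σ² > 0 under P, i.e. E_P[exp(t(f − μ))] ≤ exp(σ²t²/2) for every real t. Let δ be a real number with μ > δ. If KL(Q‖P) < (μ − δ)²/(2σ²), then E_Q[f] > δ. -/

import Mathlib

/-!
By the Donsker–Varadhan inequality — Gibbs' inequality for `Q` against the tilted measure
`P.tilted g` — every `t` gives
`t (E_Q[f] - μ) ≤ KL(Q‖P) + log E_P[exp (t (f - μ))] ≤ KL(Q‖P) + v t² / 2`.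
The Chernoff slope `t = -(μ - δ) / v` turns `KL(Q‖P) < (μ - δ)² / (2 v)` into
`μ - E_Q[f] < μ - δ`.
-/

open MeasureTheory Real

open Classical in
/-- The Kullback–Leibler divergence of `Q` from `P`, as an extended real number:
it is the `Q`-integral of the log-likelihood ratio `llr Q P` when `Q ≪ P` and this
log-likelihood ratio is `Q`-integrable, and `⊤` otherwise. -/
noncomputable def klDiv {Ω : Type*} [MeasurableSpace Ω] (Q P : Measure Ω) : EReal :=
  if Q ≪ P ∧ Integrable (llr Q P) Q
  then ((∫ ω, llr Q P ω ∂Q : ℝ) : EReal)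
  else ⊤

section

variable {Ω : Type*} [MeasurableSpace Ω] {P Q : Measure Ω}

lemma absolutelyContinuous_and_integrable_llr_of_klDiv_ne_top (h : klDiv Q P ≠ ⊤) :
    Q ≪ P ∧ Integrable (llr Q P) Q := by
  contrapose! h
  classical
  rw [klDiv, if_neg (not_and.2 h)]

lemma klDiv_of_absolutelyContinuous_of_integrable (hQP : Q ≪ P) (h_int : Integrable (llr Q P) Q) :
    klDiv Q P = ((∫ ω, llr Q P ω ∂Q : ℝ) : EReal) := by
  classical
  rw [klDiv, if_pos ⟨hQP, h_int⟩]

lemma integral_llr_nonneg [IsProbabilityMeasure P] [IsProbabilityMeasure Q]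
    (hQP : Q ≪ P) (h_int : Integrable (llr Q P) Q) : 0 ≤ ∫ ω, llr Q P ω ∂Q := by
  simpa using InformationTheory.integral_llr_add_sub_measure_univ_nonneg hQP h_int

lemma integral_le_integral_llr_add_log_integral_exp
    [IsProbabilityMeasure P] [IsProbabilityMeasure Q]
    (hQP : Q ≪ P) (h_int : Integrable (llr Q P) Q) {g : Ω → ℝ} (hgQ : Integrable g Q)
    (hgP : Integrable (fun ω ↦ exp (g ω)) P) :
    ∫ ω, g ω ∂Q ≤ ∫ ω, llr Q P ω ∂Q + log (∫ ω, exp (g ω) ∂P) := by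
  have : IsProbabilityMeasure (P.tilted g) := isProbabilityMeasure_tilted hgP
  have h_nonneg := integral_llr_nonneg (hQP.trans (absolutelyContinuous_tilted hgP))
    (integrable_llr_tilted_right hQP hgQ h_int hgP)
  rw [integral_llr_tilted_right hQP hgQ hgP h_int] at h_nonneg
  linarith

lemma mul_integral_sub_le_integral_llr_add [IsProbabilityMeasure P] [IsProbabilityMeasure Q]
    (hQP : Q ≪ P) (h_int : Integrable (llr Q P) Q) {f : Ω → ℝ} (hfQ : Integrable f Q)
    {μ v t : ℝ} (hP : Integrable (fun ω ↦ exp (t * (f ω - μ))) P)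
    (hmgf : ∫ ω, exp (t * (f ω - μ)) ∂P ≤ exp (v * t ^ 2 / 2)) :
    t * (∫ ω, f ω ∂Q - μ) ≤ ∫ ω, llr Q P ω ∂Q + v * t ^ 2 / 2 := by
  have h_dv := integral_le_integral_llr_add_log_integral_exp hQP h_int
    (g := fun ω ↦ t * (f ω - μ)) ((hfQ.sub (integrable_const μ)).const_mul t) hP
  have h_log : log (∫ ω, exp (t * (f ω - μ)) ∂P) ≤ v * t ^ 2 / 2 :=
    (log_le_iff_le_exp (integral_exp_pos hP)).2 hmgf
  rw [integral_const_mul, integral_sub hfQ (integrable_const μ), integral_const] at h_dv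
  simp only [probReal_univ, smul_eq_mul, one_mul] at h_dv
  linarith

end

theorem expectation_above_threshold_of_klDiv_lt_radius_general {Ω : Type*} [MeasurableSpace Ω]
    (P Q : Measure Ω) [IsProbabilityMeasure P] [IsProbabilityMeasure Q]
    (f : Ω → ℝ) (hfQ : Integrable f Q)
    (μ : ℝ)
    (v : ℝ) (hv : 0 < v)
    (hSG : ∀ t : ℝ, Integrable (fun ω => Real.exp (t * (f ω - μ))) P ∧
      ∫ ω, Real.exp (t * (f ω - μ)) ∂P ≤ Real.exp (v * t ^ 2 / 2))
    (δ : ℝ) (hδ : δ < μ)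
    (hlt : klDiv Q P < (((μ - δ) ^ 2 / (2 * v) : ℝ) : EReal)) :
    ∫ ω, f ω ∂Q > δ := by
  obtain ⟨hQP, h_int⟩ :=
    absolutelyContinuous_and_integrable_llr_of_klDiv_ne_top (hlt.trans (EReal.coe_lt_top _)).ne
  rw [klDiv_of_absolutelyContinuous_of_integrable hQP h_int, EReal.coe_lt_coe_iff] at hlt
  set t := -((μ - δ) / v)
  have h_transport := mul_integral_sub_le_integral_llr_add hQP h_int hfQ (hSG t).1 (hSG t).2
  have h_quad : v * t ^ 2 / 2 = (μ - δ) ^ 2 / (2 * v) := by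
    simp only [t]
    field_simp
  have h_lhs : t * (∫ ω, f ω ∂Q - μ) = (μ - δ) * (μ - ∫ ω, f ω ∂Q) / v := by
    simp only [t]
    field_simp
    ring
  have h_radius :
      (μ - δ) ^ 2 / (2 * v) + (μ - δ) ^ 2 / (2 * v) = (μ - δ) * (μ - δ) / v := by
    field_simp
    ring
  have h_gap : (μ - δ) * (μ - ∫ ω, f ω ∂Q) / v < (μ - δ) * (μ - δ) / v := by linarith
  have h_dev :=
    lt_of_mul_lt_mul_left ((div_lt_div_iff_of_pos_right hv).1 h_gap) (sub_pos.2 hδ).le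
  linarith

/-- **Certified KL radius.** If `f - μ` is sub-Gaussian with variance proxy `v` under `P`,
`Q ≪ P`, `μ > δ` and `KL(Q‖P) < (μ - δ)²/(2v)`, then `E_Q[f] > δ`. -/
theorem expectation_above_threshold_of_klDiv_lt_radius {Ω : Type*} [MeasurableSpace Ω]
    (P Q : Measure Ω) [IsProbabilityMeasure P] [IsProbabilityMeasure Q]
    (hQP : Q ≪ P)
    (f : Ω → ℝ) (hf : Measurable f) (hfQ : Integrable f Q)
    (μ : ℝ) (hμ : ∫ ω, f ω ∂P = μ)
    (v : ℝ) (hv : 0 < v)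
    (hSG : ∀ t : ℝ, Integrable (fun ω => Real.exp (t * (f ω - μ))) P ∧
      ∫ ω, Real.exp (t * (f ω - μ)) ∂P ≤ Real.exp (v * t ^ 2 / 2))
    (δ : ℝ) (hδ : δ < μ)
    (hlt : klDiv Q P < (((μ - δ) ^ 2 / (2 * v) : ℝ) : EReal)) :
    ∫ ω, f ω ∂Q > δ :=
  expectation_above_threshold_of_klDiv_lt_radius_general P Q f hfQ μ v hv hSG δ hδ hlt
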